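/- Let A be an n×n Z-matrix with unit diagonal, A = I - L - U as above, and let P̃ = I + L(α) + U(α) with α_ij ∈ [0,1] for i ≠ j. Then A is an M-matrix if and only if à = P̃A is an M-matrix. -/

import Mathlib

open Matrix BigOperators Finset

/-- Spectral radius of a real matrix: supremum of norms of its complex eigenvalues. -/
noncomputable def specRad {n : ℕ} (A : Matrix (Fin n) (Fin n) ℝ) : ℝ :=
  sSup ((fun μ : ℂ => ‖μ‖) '' spectrum ℂ (A.map (algebraMap ℝ ℂ)))

/-- A Z-matrix has nonpositive off-diagonal entries. -/
def IsZMatrix {n : ℕ} (A : Matrix (Fin n) (Fin n) ℝ) : Prop :=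
  ∀ i j, i ≠ j → A i j ≤ 0

/-- An M-matrix is a nonsingular Z-matrix with entrywise nonnegative inverse. -/
def IsMMatrix {n : ℕ} (A : Matrix (Fin n) (Fin n) ℝ) : Prop :=
  IsZMatrix A ∧ IsUnit A.det ∧ ∀ i j, 0 ≤ A⁻¹ i j

/-- `-L`: the strictly lower triangular part of `A` (so `lowerPart A ≥ 0` for a Z-matrix). -/
def lowerPart {n : ℕ} (A : Matrix (Fin n) (Fin n) ℝ) : Matrix (Fin n) (Fin n) ℝ :=
  Matrix.of fun i j => if (j : ℕ) < (i : ℕ) then -A i j else 0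

/-- `-U`: the strictly upper triangular part of `A`. -/
def upperPart {n : ℕ} (A : Matrix (Fin n) (Fin n) ℝ) : Matrix (Fin n) (Fin n) ℝ :=
  Matrix.of fun i j => if (i : ℕ) < (j : ℕ) then -A i j else 0

/-- Diagonal part of `A`. -/
def diagPart {n : ℕ} (A : Matrix (Fin n) (Fin n) ℝ) : Matrix (Fin n) (Fin n) ℝ :=
  Matrix.of fun i j => if i = j then A i j else 0

/-- The preconditioner `P̃ = I + L(α) + U(α)`: unit diagonal, off-diagonal entries `-α_ij a_ij`. -/
def precond {n : ℕ} (α : Fin n → Fin n → ℝ) (A : Matrix (Fin n) (Fin n) ℝ) :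
    Matrix (Fin n) (Fin n) ℝ :=
  Matrix.of fun i j => if i = j then 1 else -(α i j) * A i j

/-- AOR iteration matrix of `B = D_B - L_B - U_B`:
`(D_B - γ L_B)⁻¹ [(1-ω) D_B + (ω-γ) L_B + ω U_B]`. -/
noncomputable def aorMatrix {n : ℕ} (B : Matrix (Fin n) (Fin n) ℝ) (γ ω : ℝ) :
    Matrix (Fin n) (Fin n) ℝ :=
  (diagPart B - γ • lowerPart B)⁻¹ *
    ((1 - ω) • diagPart B + (ω - γ) • lowerPart B + ω • upperPart B)

/-- Irreducibility: the directed graph with an edge `i → j` whenever `A i j ≠ 0`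
is strongly connected. -/
def IsIrreducibleMat {n : ℕ} (A : Matrix (Fin n) (Fin n) ℝ) : Prop :=
  ∀ i j : Fin n, Relation.ReflTransGen (fun a b => A a b ≠ 0) i j

/-!
A Z-matrix `B` admitting a vector `x ≫ 0` with `B x ≫ 0` is an M-matrix, because then
`B z ≥ 0` forces `z ≥ 0`. If `A` is an M-matrix, `x = A⁻¹ 1` is such a vector for `P̃A`:
`P̃A x = P̃ 1 ≫ 0` as `P̃ ≥ 0` has unit diagonal, and `P̃A` is a Z-matrix since `α ≤ 1`.
Conversely, `A⁻¹ = (P̃A)⁻¹ P̃ ≥ 0`.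
-/

namespace Matrix

variable {ι : Type*} [Fintype ι]

theorem mul_apply_nonneg {P B : Matrix ι ι ℝ} (hP : ∀ i j, 0 ≤ P i j) (hB : ∀ i j, 0 ≤ B i j)
    (i j : ι) : 0 ≤ (P * B) i j :=
  Finset.sum_nonneg fun k _ => mul_nonneg (hP i k) (hB k j)

/-- Minimum principle: at an index minimising `z i / x i`, a negative minimum `t` would give
`(B *ᵥ z) i ≤ t * (B *ᵥ x) i < 0`. -/
theorem nonneg_of_mulVec_nonneg {B : Matrix ι ι ℝ} (hZ : ∀ i j, i ≠ j → B i j ≤ 0)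
    {x z : ι → ℝ} (hx : ∀ i, 0 < x i) (hBx : ∀ i, 0 < (B *ᵥ x) i)
    (hBz : ∀ i, 0 ≤ (B *ᵥ z) i) (i : ι) : 0 ≤ z i := by
  by_contra! hzi
  obtain ⟨k, -, hk⟩ := Finset.exists_min_image Finset.univ (fun j => z j / x j) ⟨i, by simp⟩
  set t := z k / x k
  have ht : t < 0 :=
    (hk i (by simp)).trans_lt (div_neg_of_neg_of_pos hzi (hx i))
  have hzk : z k - t * x k = 0 := by simp [t, div_mul_cancel₀ _ (hx k).ne']
  have hshift : (B *ᵥ (z - t • x)) k ≤ 0 := by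
    refine Finset.sum_nonpos fun j _ => ?_
    rcases eq_or_ne k j with rfl | hkj
    · simp [hzk]
    · refine mul_nonpos_of_nonpos_of_nonneg (hZ k j hkj) ?_
      have := (le_div_iff₀ (hx j)).mp (hk j (by simp))
      simp only [Pi.sub_apply, Pi.smul_apply, smul_eq_mul]
      linarith
  rw [mulVec_sub, mulVec_smul, Pi.sub_apply, Pi.smul_apply, smul_eq_mul] at hshift
  nlinarith [hBz k, hBx k]

variable [DecidableEq ι] {B : Matrix ι ι ℝ}

theorem isUnit_det_of_pos_mulVec_pos (hZ : ∀ i j, i ≠ j → B i j ≤ 0) {x : ι → ℝ}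
    (hx : ∀ i, 0 < x i) (hBx : ∀ i, 0 < (B *ᵥ x) i) : IsUnit B.det := by
  refine isUnit_iff_ne_zero.mpr fun hdet => ?_
  obtain ⟨v, hv, hBv⟩ := exists_mulVec_eq_zero_iff.mpr hdet
  refine hv (funext fun i => le_antisymm ?_ ?_)
  · simpa using nonneg_of_mulVec_nonneg hZ hx hBx (z := -v) (by simp [mulVec_neg, hBv]) i
  · exact nonneg_of_mulVec_nonneg hZ hx hBx (by simp [hBv]) i

theorem inv_nonneg_of_pos_mulVec_pos (hZ : ∀ i j, i ≠ j → B i j ≤ 0) {x : ι → ℝ}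
    (hx : ∀ i, 0 < x i) (hBx : ∀ i, 0 < (B *ᵥ x) i) (i j : ι) : 0 ≤ B⁻¹ i j := by
  have hcol : B *ᵥ (B⁻¹ *ᵥ Pi.single j 1) = Pi.single j 1 := by
    rw [mulVec_mulVec, mul_nonsing_inv _ (isUnit_det_of_pos_mulVec_pos hZ hx hBx), one_mulVec]
  simpa using nonneg_of_mulVec_nonneg hZ hx hBx (z := B⁻¹ *ᵥ Pi.single j 1)
    (fun k => by rw [hcol, Pi.single_apply]; split_ifs <;> norm_num) i

theorem inv_mulVec_one_pos (hB : IsUnit B.det) (hinv : ∀ i j, 0 ≤ B⁻¹ i j) (i : ι) :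
    0 < (B⁻¹ *ᵥ fun _ => 1) i := by
  refine (Finset.sum_nonneg fun j _ => by simpa using hinv i j).lt_of_ne fun h => ?_
  have hrow : ∀ j, B⁻¹ i j = 0 := fun j => by
    simpa using (Finset.sum_eq_zero_iff_of_nonneg fun j _ => by simpa using hinv i j).mp
      h.symm j (Finset.mem_univ j)
  simpa [mul_apply, hrow] using congr_fun (congr_fun (nonsing_inv_mul B hB) i) i

end Matrix

section Preconditioner

variable {n : ℕ} {A : Matrix (Fin n) (Fin n) ℝ} {α : Fin n → Fin n → ℝ}

@[simp]
theorem precond_apply_self (α : Fin n → Fin n → ℝ) (A : Matrix (Fin n) (Fin n) ℝ) (i : Fin n) :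
    precond α A i i = 1 := by
  simp [precond]

theorem precond_apply_of_ne {i j : Fin n} (hij : i ≠ j) : precond α A i j = -(α i j) * A i j := by
  simp [precond, hij]

theorem precond_nonneg (hZ : IsZMatrix A) (hα : ∀ i j, i ≠ j → 0 ≤ α i j) (i j : Fin n) :
    0 ≤ precond α A i j := by
  rcases eq_or_ne i j with rfl | hij
  · simp
  · rw [precond_apply_of_ne hij, neg_mul, neg_nonneg]
    exact mul_nonpos_of_nonneg_of_nonpos (hα i j hij) (hZ i j hij)

/-- The only terms of `(P̃A) i j` that can be positive are `P̃ i i * A i j + P̃ i j * A j j`,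
which sum to `(1 - α i j) * A i j ≤ 0`. -/
theorem isZMatrix_precond_mul (hZ : IsZMatrix A) (hdiag : ∀ i, A i i = 1)
    (hα : ∀ i j, i ≠ j → α i j ∈ Set.Icc (0 : ℝ) 1) : IsZMatrix (precond α A * A) := by
  intro i j hij
  have hP := precond_nonneg hZ fun i j h => (hα i j h).1
  have hrest : ∑ k ∈ Finset.univ \ {i, j}, precond α A i k * A k j ≤ 0 :=
    Finset.sum_nonpos fun k hk => by
      simp only [Finset.mem_sdiff, Finset.mem_insert, Finset.mem_singleton, not_or] at hk
      exact mul_nonpos_of_nonneg_of_nonpos (hP i k) (hZ k j hk.2.2)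
  have hpair : precond α A i i * A i j + precond α A i j * A j j = (1 - α i j) * A i j := by
    rw [precond_apply_self, precond_apply_of_ne hij, hdiag]; ring
  rw [mul_apply, ← Finset.sum_sdiff (Finset.subset_univ {i, j}), Finset.sum_pair hij, hpair]
  nlinarith [hZ i j hij, (hα i j hij).2]

theorem precond_mulVec_one_pos (hZ : IsZMatrix A) (hα : ∀ i j, i ≠ j → 0 ≤ α i j)
    (i : Fin n) : 0 < (precond α A *ᵥ fun _ => 1) i := by
  calc (0 : ℝ) < precond α A i i := by simp
    _ ≤ ∑ k, precond α A i k * 1 := by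
      simpa using Finset.single_le_sum (fun k _ => precond_nonneg hZ hα i k) (Finset.mem_univ i)

end Preconditioner

theorem IsMMatrix.of_pos_mulVec_pos {n : ℕ} {B : Matrix (Fin n) (Fin n) ℝ} (hZ : IsZMatrix B)
    {x : Fin n → ℝ} (hx : ∀ i, 0 < x i) (hBx : ∀ i, 0 < (B *ᵥ x) i) : IsMMatrix B :=
  ⟨hZ, isUnit_det_of_pos_mulVec_pos hZ hx hBx, inv_nonneg_of_pos_mulVec_pos hZ hx hBx⟩

/-- With `A` a Z-matrix with unit diagonal and `α_ij ∈ [0,1]`,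
`A` is an M-matrix iff `Ã = P̃A` is an M-matrix. -/
theorem stmt6 {n : ℕ} (A : Matrix (Fin n) (Fin n) ℝ) (hZ : IsZMatrix A)
    (hdiag : ∀ i, A i i = 1) (α : Fin n → Fin n → ℝ)
    (hα : ∀ i j, i ≠ j → α i j ∈ Set.Icc (0 : ℝ) 1) :
    IsMMatrix A ↔ IsMMatrix (precond α A * A) := by
  have hα₀ : ∀ i j, i ≠ j → 0 ≤ α i j := fun i j h => (hα i j h).1
  constructor
  · rintro ⟨-, hdet, hinv⟩
    have hAx : A *ᵥ (A⁻¹ *ᵥ fun _ => 1) = fun _ => 1 := by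
      rw [mulVec_mulVec, mul_nonsing_inv _ hdet, one_mulVec]
    refine .of_pos_mulVec_pos (isZMatrix_precond_mul hZ hdiag hα)
      (inv_mulVec_one_pos hdet hinv) fun i => ?_
    rw [← mulVec_mulVec, hAx]
    exact precond_mulVec_one_pos hZ hα₀ i
  · rintro ⟨-, hdet, hinv⟩
    rw [det_mul] at hdet
    have hAinv : A⁻¹ = (precond α A * A)⁻¹ * precond α A := by
      rw [Matrix.mul_inv_rev, Matrix.mul_assoc, nonsing_inv_mul _ (isUnit_of_mul_isUnit_left hdet),
        Matrix.mul_one]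
    refine ⟨hZ, isUnit_of_mul_isUnit_right hdet, ?_⟩
    rw [hAinv]
    exact mul_apply_nonneg hinv (precond_nonneg hZ hα₀)
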